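/- arXiv:1907.12731 — 2 statements merged into one kernel-verified Lean document; each statement's English description precedes it below -/
import Mathlib

section
/- More generally, for a rank two Drinfeld module φ and any nonzero polynomial C ∈ F_q[x] of degree k, the skew polynomial φ(C) has degree exactly 2k, and its leading coefficient is c_k · Δ^{(q^{2k}-1)/(q²-1)} where c_k is the leading coefficient of C. -/
/-- An abstract model of the skew polynomial ring `L⟨τ⟩` with the commutation rule
`τ u = u ^ q τ`: a ring `S` with a coefficient embedding `C : L →+* S`, a
distinguished element `tau`, and a coefficient function giving, for every element
of `S`, its (unique, by `indep`) representation as `∑ C (u_i) * tau ^ i`. -/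
structure SkewPolyRing (q : ℕ) (L : Type*) [Field L] (S : Type*) [Ring S] where
  C : L →+* S
  tau : S
  tau_comm : ∀ u : L, tau * C u = C (u ^ q) * tau
  coeff : S → (ℕ →₀ L)
  sum_coeff : ∀ U : S, ((coeff U).sum fun i a => C a * tau ^ i) = U
  indep : ∀ f : ℕ →₀ L, ((f.sum fun i a => C a * tau ^ i) = 0) → f = 0

namespace SkewPolyRing

variable {q : ℕ} {L S : Type*} [Field L] [Ring S]

/-- The degree of a skew polynomial (`⊥` for `0`). -/
noncomputable def degree (P : SkewPolyRing q L S) (U : S) : WithBot ℕ :=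
  (P.coeff U).support.max

end SkewPolyRing

/-! Writing `D = X * D.divX + D(0)` gives `φ D = φ X * φ D.divX + D(0)`. Left multiplication by
`φ X = c + g τ + Δ τ²` raises the `τ`-degree by exactly two, and since `τ² u = u ^ q² τ²` the new
top coefficient is `Δ * u ^ q²`, where `u` is the old one. Inducting on `deg D`, the top coefficient
of `φ D` is `lc D * Δ ^ (1 + q² + ⋯ + q^(2(k-1)))`, because `lc D ^ q² = lc D` in `F_q`; the
exponent is the geometric sum `(q^(2k) - 1) / (q² - 1)`. -/

namespace SkewPolyRing

variable {q : ℕ} {L S : Type*} [Field L] [Ring S] (P : SkewPolyRing q L S)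

theorem coeff_sum_C_mul_tau_pow (f : ℕ →₀ L) :
    P.coeff (f.sum fun i a => P.C a * P.tau ^ i) = f := by
  refine sub_eq_zero.mp (P.indep _ ?_)
  rw [Finsupp.sum_sub_index (fun _ _ _ => by rw [map_sub, sub_mul]), P.sum_coeff, sub_self]

theorem coeff_add (U V : S) : P.coeff (U + V) = P.coeff U + P.coeff V := by
  conv_lhs => rw [← P.sum_coeff U, ← P.sum_coeff V]
  rw [← Finsupp.sum_add_index' (fun _ => by simp) (fun _ _ _ => by rw [map_add, add_mul]),
    coeff_sum_C_mul_tau_pow]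

theorem coeff_C (u : L) : P.coeff (P.C u) = Finsupp.single 0 u := by
  simpa using P.coeff_sum_C_mul_tau_pow (Finsupp.single 0 u)

theorem tau_pow_mul_C (n : ℕ) (u : L) :
    P.tau ^ n * P.C u = P.C (u ^ q ^ n) * P.tau ^ n := by
  induction n generalizing u with
  | zero => simp
  | succ n ih =>
    rw [pow_succ, mul_assoc, P.tau_comm, ← mul_assoc, ih, mul_assoc, ← pow_succ, ← pow_mul,
      ← pow_succ']

theorem coeff_C_mul_tau_pow_mul (hq : q ≠ 0) (a : L) (j : ℕ) (U : S) (m : ℕ) :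
    P.coeff (P.C a * P.tau ^ j * U) (m + j) = a * P.coeff U m ^ q ^ j := by
  have hzero : (fun v : L => a * v ^ q ^ j) 0 = 0 := by simp [hq]
  have hU : P.C a * P.tau ^ j * U =
      (((P.coeff U).mapRange (fun v => a * v ^ q ^ j) hzero).mapDomain (· + j)).sum
        fun i b => P.C b * P.tau ^ i := by
    rw [Finsupp.sum_mapDomain_index (by simp) (fun _ _ _ => by rw [map_add, add_mul]),
      Finsupp.sum_mapRange_index (by simp)]
    conv_lhs => rw [← P.sum_coeff U, Finsupp.mul_sum]
    refine Finsupp.sum_congr fun i _ => ?_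
    rw [mul_assoc, ← mul_assoc (P.tau ^ j), tau_pow_mul_C, map_mul, pow_add, pow_mul_comm]
    noncomm_ring
  rw [hU, coeff_sum_C_mul_tau_pow, Finsupp.mapDomain_apply (add_left_injective j),
    Finsupp.mapRange_apply]

theorem coeff_quadratic_mul_add_C (hq : q ≠ 0) (c g Δ b : L) (U : S) (m : ℕ) :
    P.coeff ((P.C c + P.C g * P.tau + P.C Δ * P.tau ^ 2) * U + P.C b) (m + 2) =
      c * P.coeff U (m + 2) + g * P.coeff U (m + 1) ^ q + Δ * P.coeff U m ^ q ^ 2 := by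
  have h0 : P.coeff (P.C c * U) (m + 2) = c * P.coeff U (m + 2) := by
    simpa using P.coeff_C_mul_tau_pow_mul hq c 0 U (m + 2)
  have h1 : P.coeff (P.C g * P.tau * U) (m + 2) = g * P.coeff U (m + 1) ^ q := by
    simpa using P.coeff_C_mul_tau_pow_mul hq g 1 U (m + 1)
  simp only [add_mul, coeff_add, Finsupp.add_apply, h0, h1, P.coeff_C_mul_tau_pow_mul hq,
    coeff_C, Finsupp.single_eq_of_ne (Nat.succ_ne_zero _), add_zero]

theorem degree_eq_of_coeff_ne_zero {U : S} {d : ℕ} (hvan : ∀ m, d < m → P.coeff U m = 0)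
    (hd : P.coeff U d ≠ 0) : P.degree U = d :=
  le_antisymm
    (Finset.max_le fun m hm =>
      WithBot.coe_le_coe.2 (not_lt.1 fun h => Finsupp.mem_support_iff.1 hm (hvan m h)))
    (Finset.le_max (Finsupp.mem_support_iff.2 hd))

end SkewPolyRing

open Polynomial Finset

section DrinfeldModule

variable {q : ℕ} {Fq L S : Type*} [Field Fq] [Field L] [Algebra Fq L] [Ring S]
  (P : SkewPolyRing q L S) {c g Δ : L} {φ : Fq[X] →+* S}

theorem phi_eq_mul_phi_divX_add_C
    (hconst : ∀ a : Fq, φ (C a) = P.C (algebraMap Fq L a))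
    (hX : φ X = P.C c + P.C g * P.tau + P.C Δ * P.tau ^ 2) (D : Fq[X]) :
    φ D = (P.C c + P.C g * P.tau + P.C Δ * P.tau ^ 2) * φ D.divX +
      P.C (algebraMap Fq L (D.coeff 0)) := by
  conv_lhs => rw [← X_mul_divX_add D]
  rw [map_add, map_mul, hX, hconst]

theorem coeff_phi_of_natDegree_eq [Fintype Fq] (hq : q = Fintype.card Fq)
    (hconst : ∀ a : Fq, φ (C a) = P.C (algebraMap Fq L a))
    (hX : φ X = P.C c + P.C g * P.tau + P.C Δ * P.tau ^ 2) {n : ℕ} {D : Fq[X]}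
    (hD : D.natDegree = n) :
    (∀ m, 2 * n < m → P.coeff (φ D) m = 0) ∧
      P.coeff (φ D) (2 * n) =
        algebraMap Fq L D.leadingCoeff * Δ ^ ∑ i ∈ range n, (q ^ 2) ^ i := by
  have hq0 : q ≠ 0 := hq ▸ Fintype.card_ne_zero
  induction n generalizing D with
  | zero =>
    rw [eq_C_of_natDegree_eq_zero hD, hconst, P.coeff_C]
    exact ⟨fun m hm => Finsupp.single_eq_of_ne (by omega), by simp⟩
  | succ n ih =>
    have hdivX : D.divX.natDegree = n := by rw [natDegree_divX_eq_natDegree_tsub_one, hD]; rfl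
    have hlc : D.divX.leadingCoeff = D.leadingCoeff := by
      rw [leadingCoeff, hdivX, coeff_divX, leadingCoeff, hD]
    have hfrob : algebraMap Fq L D.leadingCoeff ^ q ^ 2 = algebraMap Fq L D.leadingCoeff := by
      rw [← map_pow, hq, FiniteField.pow_card_pow]
    obtain ⟨hvan, hlead⟩ := ih hdivX
    rw [phi_eq_mul_phi_divX_add_C P hconst hX]
    refine ⟨fun m hm => ?_, ?_⟩
    · obtain ⟨m, rfl⟩ : ∃ m', m = m' + 2 := ⟨m - 2, by omega⟩
      rw [P.coeff_quadratic_mul_add_C hq0, hvan _ (by omega), hvan _ (by omega),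
        hvan _ (by omega)]
      simp [hq0]
    · rw [show 2 * (n + 1) = 2 * n + 2 by ring, P.coeff_quadratic_mul_add_C hq0,
        hvan _ (by omega), hvan _ (by omega), hlead, hlc, geom_sum_succ, mul_pow, hfrob,
        ← pow_mul, pow_succ Δ, zero_pow hq0]
      ring

end DrinfeldModule

theorem degree_and_leading_coeff_phi_C_general
    (q : ℕ) (Fq L S : Type*) [Field Fq] [Fintype Fq] [Field L]
    [Algebra Fq L] [Ring S]
    (hq : q = Fintype.card Fq)
    (P : SkewPolyRing q L S)
    (c g Δ : L) (hΔ : Δ ≠ 0)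
    (φ : Polynomial Fq →+* S)
    (hconst : ∀ a : Fq, φ (Polynomial.C a) = P.C (algebraMap Fq L a))
    (hX : φ Polynomial.X = P.C c + P.C g * P.tau + P.C Δ * P.tau ^ 2)
    (C : Polynomial Fq) (hC : C ≠ 0) (k : ℕ) (hk : C.natDegree = k) :
    P.degree (φ C) = (2 * k : ℕ) ∧
    P.coeff (φ C) (2 * k) =
      algebraMap Fq L C.leadingCoeff * Δ ^ ((q ^ (2 * k) - 1) / (q ^ 2 - 1)) := by
  obtain ⟨hvan, hlead⟩ := coeff_phi_of_natDegree_eq P hq hconst hX hk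
  have hq2 : 2 ≤ q ^ 2 :=
    (hq ▸ Fintype.one_lt_card : 1 < q).trans_le (Nat.le_self_pow two_ne_zero q)
  have hlead_ne : P.coeff (φ C) (2 * k) ≠ 0 := by
    rw [hlead]
    exact mul_ne_zero ((_root_.map_ne_zero _).2 (leadingCoeff_ne_zero.2 hC)) (pow_ne_zero _ hΔ)
  refine ⟨P.degree_eq_of_coeff_ne_zero hvan hlead_ne, ?_⟩
  rw [hlead, pow_mul, Nat.geomSum_eq hq2]

/-- for any nonzero `C ∈ F_q[x]` of degree `k`, the skew polynomial
`φ(C)` has degree exactly `2k`, with leading coefficient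
`c_k · Δ ^ ((q^(2k) - 1)/(q² - 1))`, where `c_k` is the leading coefficient of `C`. -/
theorem degree_and_leading_coeff_phi_C
    (p q : ℕ) (Fq L S : Type*) [Field Fq] [Fintype Fq] [Field L] [Fintype L]
    [Algebra Fq L] [Ring S] (hp : p.Prime) [CharP L p]
    (hq : q = Fintype.card Fq)
    (P : SkewPolyRing q L S)
    (c g Δ : L) (hΔ : Δ ≠ 0)
    (φ : Polynomial Fq →+* S)
    (hconst : ∀ a : Fq, φ (Polynomial.C a) = P.C (algebraMap Fq L a))
    (hX : φ Polynomial.X = P.C c + P.C g * P.tau + P.C Δ * P.tau ^ 2)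
    (C : Polynomial Fq) (hC : C ≠ 0) (k : ℕ) (hk : C.natDegree = k) :
    P.degree (φ C) = (2 * k : ℕ) ∧
    P.coeff (φ C) (2 * k) =
      algebraMap Fq L C.leadingCoeff * Δ ^ ((q ^ (2 * k) - 1) / (q ^ 2 - 1)) :=
  degree_and_leading_coeff_phi_C_general q Fq L S hq P c g Δ hΔ φ hconst hX C hC k hk
end

section
/- Let φ be a rank two Drinfeld module over (L, γ) with L of degree n over F_q, and let Φ_x = γ(x)·Id + g·π + Δ·π² ∈ End_{F_q}(L) with Δ ≠ 0. Then the minimal polynomial Γ ∈ F_q[x] of Φ_x has degree ν satisfying 2ν ≥ n. -/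
/-!
`Φ_x` is evaluation of the polynomial `f = c X + g X^q + Δ X^{q²}`, of degree `q²` as `Δ ≠ 0`.
Hence `Γ(Φ_x) = 0` says that `∑ Γ_i f^{∘i}` vanishes on all of `L`; since `Γ` is monic and
`f^{∘i}` has degree `q^{2i}`, this polynomial has degree exactly `q^{2ν}`, so it is nonzero and
`q^n = |L| ≤ q^{2ν}`.
-/

open Polynomial

section IterateComp

variable {R : Type*} [CommRing R] [IsDomain R]

theorem natDegree_sum_C_mul_iterate_comp_X {f : R[X]} (hf : 1 < f.natDegree) {a : ℕ → R}
    {ν : ℕ} (ha : a ν ≠ 0) :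
    (∑ i ∈ Finset.range (ν + 1), C (a i) * f.comp^[i] X).natDegree = f.natDegree ^ ν := by
  have hlast : (C (a ν) * f.comp^[ν] X).natDegree = f.natDegree ^ ν := by
    rw [natDegree_C_mul ha, natDegree_iterate_comp, natDegree_X, mul_one]
  have hlast_ne : C (a ν) * f.comp^[ν] X ≠ 0 :=
    ne_zero_of_natDegree_gt (n := 0) (hlast ▸ pow_pos (zero_lt_one.trans hf) ν)
  have hlow : (∑ i ∈ Finset.range ν, C (a i) * f.comp^[i] X).degree
      < (C (a ν) * f.comp^[ν] X).degree := by
    rw [degree_eq_natDegree hlast_ne, hlast]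
    refine (degree_sum_le _ _).trans_lt ((Finset.sup_lt_iff (WithBot.bot_lt_coe _)).2 ?_)
    intro i hi
    refine degree_le_natDegree.trans_lt ?_
    have hdeg : (f.comp^[i] X).natDegree < f.natDegree ^ ν := by
      rw [natDegree_iterate_comp, natDegree_X, mul_one]
      exact Nat.pow_lt_pow_right hf (Finset.mem_range.1 hi)
    exact_mod_cast (natDegree_C_mul_le _ _).trans_lt hdeg
  rw [Finset.sum_range_succ, natDegree_add_eq_right_of_degree_lt hlow, hlast]

theorem natCard_le_natDegree_of_forall_eval_eq_zero [Finite R] {p : R[X]} (hp : p ≠ 0)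
    (h : ∀ r, p.eval r = 0) : Nat.card R ≤ p.natDegree := by
  have := Fintype.ofFinite R
  by_contra! hlt
  exact hp (eq_zero_of_natDegree_lt_card_of_eval_eq_zero p Function.injective_id h
    (Nat.card_eq_fintype_card (α := R) ▸ hlt))

theorem natCard_le_pow_of_sum_iterate_eq_zero [Finite R] {f : R[X]} (hf : 1 < f.natDegree)
    {a : ℕ → R} {ν : ℕ} (ha : a ν ≠ 0)
    (hann : ∀ v, ∑ i ∈ Finset.range (ν + 1), a i * (fun x => f.eval x)^[i] v = 0) :
    Nat.card R ≤ f.natDegree ^ ν := by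
  set P := ∑ i ∈ Finset.range (ν + 1), C (a i) * f.comp^[i] X
  have hP : P.natDegree = f.natDegree ^ ν := natDegree_sum_C_mul_iterate_comp_X hf ha
  have hP_ne : P ≠ 0 := ne_zero_of_natDegree_gt (n := 0) (hP ▸ pow_pos (zero_lt_one.trans hf) ν)
  have hP_eval : ∀ v, P.eval v = 0 := fun v => by simpa [P, eval_finsetSum] using hann v
  exact hP ▸ natCard_le_natDegree_of_forall_eval_eq_zero hP_ne hP_eval

end IterateComp

section RankTwo

variable {L : Type*} [Field L]

noncomputable def rankTwoPoly (q : ℕ) (c g Δ : L) : L[X] :=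
  C c * X + C g * X ^ q + C Δ * X ^ q ^ 2

theorem natDegree_rankTwoPoly {q : ℕ} (hq : 1 < q) (c g : L) {Δ : L} (hΔ : Δ ≠ 0) :
    (rankTwoPoly q c g Δ).natDegree = q ^ 2 := by
  have hlow : (C c * X + C g * X ^ q).natDegree < q ^ 2 := by
    refine ((natDegree_add_le _ _).trans (max_le ?_ ?_)).trans_lt (lt_self_pow₀ hq one_lt_two)
    · exact (natDegree_C_mul_le _ _).trans (natDegree_X_le.trans hq.le)
    · exact (natDegree_C_mul_le _ _).trans (natDegree_X_pow_le q)
  rw [rankTwoPoly, natDegree_add_eq_right_of_natDegree_lt, natDegree_C_mul_X_pow _ _ hΔ]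
  rwa [natDegree_C_mul_X_pow _ _ hΔ]

theorem eval_rankTwoPoly (q : ℕ) (c g Δ v : L) :
    (rankTwoPoly q c g Δ).eval v = c * v + g * v ^ q + Δ * v ^ q ^ 2 := by
  simp [rankTwoPoly]

end RankTwo

theorem minpoly_of_Phi_x_degree_ge_half_n_general
    (q n : ℕ) (Fq L : Type*) [Field Fq] [Fintype Fq] [Field L] [Algebra Fq L]
    [FiniteDimensional Fq L]
    (hq : q = Fintype.card Fq) (hn : Module.finrank Fq L = n)
    (c g Δ : L) (hΔ : Δ ≠ 0)
    (Φ : L → L) (hΦ : ∀ v : L, Φ v = c * v + g * v ^ q + Δ * v ^ q ^ 2)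
    (Γ : Polynomial Fq) (hmonic : Γ.Monic)
    (hann : ∀ v : L, ∑ i ∈ Finset.range (Γ.natDegree + 1),
        algebraMap Fq L (Γ.coeff i) * Φ^[i] v = 0) :
    n ≤ 2 * Γ.natDegree := by
  have hq1 : 1 < q := hq ▸ Fintype.one_lt_card
  have hdeg := natDegree_rankTwoPoly hq1 c g hΔ
  have hΦ_eval : Φ = fun v => (rankTwoPoly q c g Δ).eval v :=
    funext fun v => by rw [hΦ, eval_rankTwoPoly]
  have : Finite L := Module.finite_of_finite Fq
  have key := natCard_le_pow_of_sum_iterate_eq_zero (hdeg ▸ one_lt_pow₀ hq1 two_ne_zero)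
    (a := fun i => algebraMap Fq L (Γ.coeff i)) (by simp [hmonic.coeff_natDegree]) (hΦ_eval ▸ hann)
  rw [hdeg, Module.natCard_eq_pow_finrank (K := Fq), hn, Nat.card_eq_fintype_card, ← hq,
    ← pow_mul] at key
  exact (Nat.pow_le_pow_iff_right hq1).1 key

/-- for a rank two Drinfeld module with
`Φ_x = γ(x)·Id + g·π + Δ·π²` (`Δ ≠ 0`) on a degree-`n` extension `L` of `F_q`,
the minimal polynomial `Γ` of `Φ_x` over `F_q` has degree `ν` with `2ν ≥ n`.
Annihilation by a polynomial `G` is expressed pointwise: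
`∑ i, G.coeff i • Φ_x^[i] v = 0` for all `v ∈ L`. -/
theorem minpoly_of_Phi_x_degree_ge_half_n
    (q n : ℕ) (Fq L : Type*) [Field Fq] [Fintype Fq] [Field L] [Algebra Fq L]
    [FiniteDimensional Fq L]
    (hq : q = Fintype.card Fq) (hn : Module.finrank Fq L = n)
    (c g Δ : L) (hΔ : Δ ≠ 0)
    (γ : Polynomial Fq →+* L) (hc : c = γ Polynomial.X)
    (Φ : L → L) (hΦ : ∀ v : L, Φ v = c * v + g * v ^ q + Δ * v ^ q ^ 2)
    (Γ : Polynomial Fq) (hmonic : Γ.Monic)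
    (hann : ∀ v : L, ∑ i ∈ Finset.range (Γ.natDegree + 1),
        algebraMap Fq L (Γ.coeff i) * Φ^[i] v = 0)
    (hmin : ∀ G : Polynomial Fq, G ≠ 0 →
        (∀ v : L, ∑ i ∈ Finset.range (G.natDegree + 1),
          algebraMap Fq L (G.coeff i) * Φ^[i] v = 0) →
        Γ.natDegree ≤ G.natDegree) :
    n ≤ 2 * Γ.natDegree :=
  minpoly_of_Phi_x_degree_ge_half_n_general q n Fq L hq hn c g Δ hΔ Φ hΦ Γ hmonic hann
end
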